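/- Fix integers d ≥ 1 and N ≥ 1 and unit vectors v_1, …, v_N ∈ ℂ^d. Then ∫ ∏_{i=1}^N |⟨v_i, φ⟩|² dμ_d(φ) ≤ N! (d−1)! / (N+d−1)!, i.e. the probability of any fixed outcome string under N independent single-copy measurements of a Haar-random pure state is at most the reciprocal of the dimension C(N+d−1, N) of the symmetric subspace of (ℂ^d)^{⊗N}. -/

import Mathlib

/-!
A unitarily invariant probability measure on the unit sphere of `ℂ^d` gives `⟨u, φ⟩` the
same law for every unit vector `u`, namely that of the coordinate `φ₀`. By AM-GM,
`∏ᵢ |⟨vᵢ, φ⟩|² ≤ N⁻¹ ∑ᵢ |⟨vᵢ, φ⟩|^{2N}`, so the integral is at most the moment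
`M_N = ∫ |φ₀|^{2N}`, and it remains to show `M_n = n! (d-1)! / (n+d-1)!`.

For `i ≠ k` and real `a, b`, invariance gives `∫ |a φᵢ + b φₖ|^{2m} = (a² + b²)^m M_m`, while
expanding the left side and discarding the terms killed by rotating the phase of `φᵢ` gives
`∑ⱼ C(m,j)² a^{2j} b^{2(m-j)} ∫ |φᵢ|^{2j} |φₖ|^{2(m-j)}`. Comparing coefficients yields
`C(m,j) ∫ |φᵢ|^{2j} |φₖ|^{2(m-j)} = M_m`, and inserting `1 = ∑ₗ |φₗ|²` into `M_n` then gives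
the recursion `(n+1) M_n = (n+d) M_{n+1}`.
-/

open MeasureTheory Matrix

/-- The Hermitian inner product `⟨u, v⟩ = ∑ i, conj (u i) * v i` on `ℂ^d`. -/
noncomputable def cInner {d : ℕ} (u v : Fin d → ℂ) : ℂ :=
  ∑ i, (starRingEnd ℂ) (u i) * v i

/-- `μ` is the Haar probability measure on the compact group `U(d)` of `d × d`
complex unitary matrices, viewed as a Borel measure on the space of all `d × d`
complex matrices: it is a probability measure, it is supported on the unitary
matrices, and it is invariant under left translation by every unitary matrix.
(On the compact metrizable group `U(d)` these properties characterize the Haar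
probability measure uniquely.) -/
def IsHaarUnitary {d : ℕ} (μ : Measure (Fin d → Fin d → ℂ)) : Prop :=
  IsProbabilityMeasure μ ∧
    (∀ᵐ U ∂μ, Matrix.of U ∈ Matrix.unitaryGroup (Fin d) ℂ) ∧
    ∀ V ∈ Matrix.unitaryGroup (Fin d) ℂ,
      μ.map (fun U => Matrix.of.symm (V * Matrix.of U)) = μ

/-- The Haar pure-state measure `μ_d` on `ℂ^d`: the pushforward of the Haar
probability measure on `U(d)` under the map sending a unitary to its first
column. -/
noncomputable def pureStateMeasure {d : ℕ} (hd : 0 < d)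
    (μ : Measure (Fin d → Fin d → ℂ)) : Measure (Fin d → ℂ) :=
  μ.map fun U i => U i ⟨0, hd⟩

/-- The Born-rule probability `|⟨U e_x, ψ⟩|²` of outcome `x` when measuring the
pure state `ψ` in the orthonormal basis given by the columns of `U`. -/
noncomputable def bornP {d : ℕ} (U : Fin d → Fin d → ℂ) (x : Fin d)
    (ψ : Fin d → ℂ) : ℝ :=
  ‖∑ i, (starRingEnd ℂ) (U i x) * ψ i‖ ^ 2

open Finset ComplexConjugate

section

variable {d : ℕ}

lemma cInner_eq_inner (u v : Fin d → ℂ) :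
    cInner u v = inner ℂ (WithLp.toLp 2 u) (WithLp.toLp 2 v) := by
  simp [cInner, PiLp.inner_apply, mul_comm]

lemma cInner_self_eq_one {v : Fin d → ℂ} (hv : ∑ j, ‖v j‖ ^ 2 = 1) : cInner v v = 1 := by
  rw [cInner_eq_inner, inner_self_eq_norm_sq_to_K, EuclideanSpace.norm_eq]
  simp [hv]

lemma cInner_smul_left (r : ℂ) (u v : Fin d → ℂ) :
    cInner (r • u) v = conj r * cInner u v := by
  simp [cInner, mul_sum, mul_assoc]

lemma cInner_smul_right (r : ℂ) (u v : Fin d → ℂ) : cInner u (r • v) = r * cInner u v := by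
  simp [cInner, mul_sum, mul_left_comm]

lemma cInner_single_add_single (i k : Fin d) (α β : ℂ) (φ : Fin d → ℂ) :
    cInner (Pi.single i α + Pi.single k β) φ = conj α * φ i + conj β * φ k := by
  classical
  simp [cInner, add_mul, sum_add_distrib, Pi.single_apply, apply_ite conj]

lemma exists_mem_unitaryGroup_cInner_mulVec {u : Fin d → ℂ} (hu : cInner u u = 1) (i : Fin d) :
    ∃ V ∈ unitaryGroup (Fin d) ℂ, ∀ φ, cInner u (V *ᵥ φ) = φ i := by
  classical
  have hon : Orthonormal ℂ (({i} : Set (Fin d)).domRestrict fun _ => WithLp.toLp 2 u) := by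
    rw [orthonormal_iff_ite]
    rintro ⟨j, rfl⟩ ⟨k, rfl⟩
    simpa [Set.domRestrict, ← cInner_eq_inner, -inner_self_eq_norm_sq_to_K] using hu
  obtain ⟨b, hb⟩ := hon.exists_orthonormalBasis_extension_of_card_eq (by simp)
  have hbi : b i = WithLp.toLp 2 u := hb i rfl
  refine ⟨(EuclideanSpace.basisFun (Fin d) ℂ).toBasis.toMatrix b,
    OrthonormalBasis.toMatrix_orthonormalBasis_mem_unitary _ _, fun φ => ?_⟩
  calc cInner u ((EuclideanSpace.basisFun (Fin d) ℂ).toBasis.toMatrix b *ᵥ φ)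
      = ∑ k, inner ℂ (b i) (b k) * φ k := by
        simp only [cInner, mulVec, dotProduct, Module.Basis.toMatrix_apply, hbi,
          PiLp.inner_apply, mul_sum, sum_mul]
        rw [sum_comm]
        simp [mul_comm, mul_assoc]
    _ = φ i := by simp [orthonormal_iff_ite.mp b.orthonormal]

end

lemma ofReal_norm_pow_two_mul (z : ℂ) (n : ℕ) :
    ((‖z‖ ^ (2 * n) : ℝ) : ℂ) = z ^ n * conj z ^ n := by
  rw [← mul_pow, Complex.mul_conj', ← pow_mul, mul_comm]
  push_cast
  rfl

lemma eq_of_forall_pos_sum_mul_pow_eq {n : ℕ} {c c' : ℕ → ℝ}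
    (h : ∀ x : ℝ, 0 < x →
      ∑ j ∈ range (n + 1), c j * x ^ j = ∑ j ∈ range (n + 1), c' j * x ^ j)
    {j : ℕ} (hj : j ≤ n) : c j = c' j := by
  classical
  let p : (ℕ → ℝ) → Polynomial ℝ := fun e => ∑ j ∈ range (n + 1), Polynomial.monomial j (e j)
  have hcoeff : ∀ e, (p e).coeff j = e j := fun e => by
    simp [p, Polynomial.finsetSum_coeff, Polynomial.coeff_monomial, hj]
  have hp : p c = p c' := Polynomial.eq_of_infinite_eval_eq _ _ <|
    (Set.Ioi_infinite (0 : ℝ)).mono fun x hx => by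
      simpa [p, Polynomial.eval_finsetSum, mul_comm] using h x hx
  rw [← hcoeff c, hp, hcoeff]

lemma prod_le_inv_card_mul_sum_pow {ι : Type*} {s : Finset ι} (hs : s.Nonempty) {x : ι → ℝ}
    (hx : ∀ i ∈ s, 0 ≤ x i) : ∏ i ∈ s, x i ≤ (#s : ℝ)⁻¹ * ∑ i ∈ s, x i ^ #s := by
  have hcard : (#s : ℝ) ≠ 0 := by exact_mod_cast hs.card_pos.ne'
  have hroot : ∀ i ∈ s, (x i ^ #s) ^ (#s : ℝ)⁻¹ = x i := fun i hi => by
    rw [← Real.rpow_natCast, ← Real.rpow_mul (hx i hi), mul_inv_cancel₀ hcard, Real.rpow_one]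
  calc ∏ i ∈ s, x i = ∏ i ∈ s, (x i ^ #s) ^ (#s : ℝ)⁻¹ := (prod_congr rfl hroot).symm
    _ ≤ ∑ i ∈ s, (#s : ℝ)⁻¹ * x i ^ #s :=
      Real.geom_mean_le_arith_mean_weighted s _ _ (fun _ _ => by positivity)
        (by rw [sum_const, nsmul_eq_mul, mul_inv_cancel₀ hcard])
        fun i hi => pow_nonneg (hx i hi) _
    _ = (#s : ℝ)⁻¹ * ∑ i ∈ s, x i ^ #s := (mul_sum _ _ _).symm

structure IsUnitarilyInvariantOnSphere {d : ℕ} (ν : Measure (Fin d → ℂ)) : Prop where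
  isProbabilityMeasure : IsProbabilityMeasure ν
  ae_sum_norm_sq_eq_one : ∀ᵐ φ ∂ν, ∑ j, ‖φ j‖ ^ 2 = 1
  map_mulVec : ∀ V ∈ unitaryGroup (Fin d) ℂ, ν.map (V *ᵥ ·) = ν

lemma IsHaarUnitary.isUnitarilyInvariantOnSphere_pureStateMeasure {d : ℕ}
    {μ : Measure (Fin d → Fin d → ℂ)} (hμ : IsHaarUnitary μ) (hd : 0 < d) :
    IsUnitarilyInvariantOnSphere (pureStateMeasure hd μ) := by
  obtain ⟨_, hunitary, hinv⟩ := hμ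
  have hcol : Measurable fun (U : Fin d → Fin d → ℂ) i => U i ⟨0, hd⟩ := by fun_prop
  refine ⟨Measure.isProbabilityMeasure_map hcol.aemeasurable, ?_, fun V hV => ?_⟩
  · have hsphere : MeasurableSet {φ : Fin d → ℂ | ∑ j, ‖φ j‖ ^ 2 = 1} :=
      measurableSet_eq_fun (by fun_prop) measurable_const
    rw [pureStateMeasure, ae_map_iff hcol.aemeasurable hsphere]
    filter_upwards [hunitary] with U hU
    have h := congrFun (congrFun (mem_unitaryGroup_iff'.mp hU) ⟨0, hd⟩) ⟨0, hd⟩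
    simp only [mul_apply, star_apply, of_apply, one_apply_eq, RCLike.star_def,
      Complex.conj_mul'] at h
    exact_mod_cast h
  · have hmul : Measurable fun U : Fin d → Fin d → ℂ => of.symm (V * of U) := by
      refine measurable_pi_lambda _ fun i => measurable_pi_lambda _ fun j => ?_
      simp only [of_symm_apply, mul_apply, of_apply]
      fun_prop
    have hcomm : (V *ᵥ ·) ∘ (fun (U : Fin d → Fin d → ℂ) i => U i ⟨0, hd⟩) =
        (fun U i => U i ⟨0, hd⟩) ∘ fun U => of.symm (V * of U) := by
      ext U i
      simp [mulVec, dotProduct, mul_apply]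
    rw [pureStateMeasure, Measure.map_map (by fun_prop) hcol, hcomm,
      ← Measure.map_map hcol hmul, hinv V hV]

namespace IsUnitarilyInvariantOnSphere

variable {d : ℕ} {ν : Measure (Fin d → ℂ)}

lemma ae_norm_le_one (hν : IsUnitarilyInvariantOnSphere ν) : ∀ᵐ φ ∂ν, ‖φ‖ ≤ 1 := by
  filter_upwards [hν.ae_sum_norm_sq_eq_one] with φ hφ
  refine (pi_norm_le_iff_of_nonneg zero_le_one).mpr fun i => ?_
  have : ‖φ i‖ ^ 2 ≤ 1 :=
    hφ ▸ single_le_sum (f := fun j => ‖φ j‖ ^ 2) (fun j _ => by positivity) (mem_univ i)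
  nlinarith [norm_nonneg (φ i)]

lemma integrable_of_continuous (hν : IsUnitarilyInvariantOnSphere ν) {E : Type*}
    [NormedAddCommGroup E] {f : (Fin d → ℂ) → E} (hf : Continuous f) : Integrable f ν := by
  have := hν.isProbabilityMeasure
  obtain ⟨C, hC⟩ := (isCompact_closedBall (0 : Fin d → ℂ) 1).exists_bound_of_continuousOn
    hf.continuousOn
  refine (integrable_const C).mono' hf.aestronglyMeasurable ?_
  filter_upwards [hν.ae_norm_le_one] with φ hφ
  exact hC φ (mem_closedBall_zero_iff.mpr hφ)

section

variable {E : Type*} [NormedAddCommGroup E] [NormedSpace ℝ E]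

lemma integral_comp_mulVec (hν : IsUnitarilyInvariantOnSphere ν) {V : Matrix (Fin d) (Fin d) ℂ}
    (hV : V ∈ unitaryGroup (Fin d) ℂ) {f : (Fin d → ℂ) → E} (hf : Continuous f) :
    ∫ φ, f (V *ᵥ φ) ∂ν = ∫ φ, f φ ∂ν := by
  conv_rhs => rw [← hν.map_mulVec V hV]
  exact (integral_map (by fun_prop) hf.aestronglyMeasurable).symm

lemma integral_comp_cInner (hν : IsUnitarilyInvariantOnSphere ν) {u : Fin d → ℂ}
    (hu : cInner u u = 1) (i : Fin d) {g : ℂ → E} (hg : Continuous g) :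
    ∫ φ, g (cInner u φ) ∂ν = ∫ φ, g (φ i) ∂ν := by
  obtain ⟨V, hV, hVu⟩ := exists_mem_unitaryGroup_cInner_mulVec hu i
  rw [← hν.integral_comp_mulVec hV (by unfold cInner; fun_prop)]
  simp only [hVu]

end

/-- Rotating the phase of `φ i` by `ω` with `ω ^ a * conj ω ^ b = -1` negates the integral. -/
lemma integral_pow_mul_conj_pow_mul_eq_zero (hν : IsUnitarilyInvariantOnSphere ν) {i k : Fin d}
    (hik : i ≠ k) {a b : ℕ} (hab : a ≠ b) {g : ℂ → ℂ} (hg : Continuous g) :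
    ∫ φ, φ i ^ a * conj (φ i) ^ b * g (φ k) ∂ν = 0 := by
  set ω : ℂ := Complex.exp (Real.pi * Complex.I / ((a : ℂ) - b))
  have hab' : (a : ℂ) - b ≠ 0 := sub_ne_zero.2 (by exact_mod_cast hab)
  have hconj : conj ω = Complex.exp (-(Real.pi * Complex.I / ((a : ℂ) - b))) := by
    rw [← Complex.exp_conj]
    simp [map_div₀, Complex.conj_I, neg_div]
  have hphase : ω ^ a * conj ω ^ b = -1 := by
    rw [hconj, ← Complex.exp_nat_mul, ← Complex.exp_nat_mul, ← Complex.exp_add,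
      ← Complex.exp_pi_mul_I]
    congr 1
    field_simp
    ring
  set D := diagonal fun j => if j = i then ω else 1
  have hD : D ∈ unitaryGroup (Fin d) ℂ := by
    rw [mem_unitaryGroup_iff', star_eq_conjTranspose, diagonal_conjTranspose,
      diagonal_mul_diagonal, ← diagonal_one]
    congr 1
    ext j
    by_cases hj : j = i
    · simp [hj, ω, ← Complex.exp_conj, ← Complex.exp_add, neg_div]
    · simp [hj]
  have key := hν.integral_comp_mulVec hD (f := fun φ => φ i ^ a * conj (φ i) ^ b * g (φ k))
    (by fun_prop)
  simp only [D, mulVec_diagonal, if_pos, if_neg hik.symm, one_mul, map_mul, mul_pow] at key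
  simp_rw [show ∀ x y z : ℂ, ω ^ a * x * (conj ω ^ b * y) * z = ω ^ a * conj ω ^ b * (x * y * z)
    from fun _ _ _ => by ring, integral_const_mul, hphase] at key
  linear_combination -key / 2

lemma integral_norm_add_pow (hν : IsUnitarilyInvariantOnSphere ν) {i k : Fin d} (hik : i ≠ k)
    (a b : ℝ) (m : ℕ) :
    ∫ φ, ‖(a : ℂ) * φ i + b * φ k‖ ^ (2 * m) ∂ν =
      ∑ j ∈ range (m + 1), (m.choose j : ℝ) ^ 2 * (a ^ (2 * j) * b ^ (2 * (m - j))) *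
        ∫ φ, ‖φ i‖ ^ (2 * j) * ‖φ k‖ ^ (2 * (m - j)) ∂ν := by
  set c : ℕ → ℂ := fun j => a ^ j * b ^ (m - j) * m.choose j
  have hexpand : ∀ φ : Fin d → ℂ, ((‖(a : ℂ) * φ i + b * φ k‖ ^ (2 * m) : ℝ) : ℂ) =
      ∑ j ∈ range (m + 1), ∑ l ∈ range (m + 1), c j * c l *
        (φ i ^ j * conj (φ i) ^ l * (φ k ^ (m - j) * conj (φ k) ^ (m - l))) := by
    intro φ
    simp only [ofReal_norm_pow_two_mul, map_add, map_mul, Complex.conj_ofReal, add_pow,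
      sum_mul_sum]
    refine sum_congr rfl fun j _ => sum_congr rfl fun l _ => ?_
    ring
  have hdiag : ∀ j, ∫ φ, φ i ^ j * conj (φ i) ^ j * (φ k ^ (m - j) * conj (φ k) ^ (m - j)) ∂ν =
      ((∫ φ, ‖φ i‖ ^ (2 * j) * ‖φ k‖ ^ (2 * (m - j)) ∂ν : ℝ) : ℂ) := fun j => by
    simp only [← integral_complex_ofReal, Complex.ofReal_mul, ofReal_norm_pow_two_mul]
  apply Complex.ofReal_injective
  rw [← integral_complex_ofReal]
  simp_rw [hexpand]
  rw [integral_finsetSum _ fun j _ => hν.integrable_of_continuous (by fun_prop)]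
  push_cast
  refine sum_congr rfl fun j hj => ?_
  rw [integral_finsetSum _ fun l _ => hν.integrable_of_continuous (by fun_prop),
    sum_eq_single_of_mem j hj fun l _ hlj => ?_, integral_const_mul, hdiag]
  · simp only [c]
    ring
  · rw [integral_const_mul, hν.integral_pow_mul_conj_pow_mul_eq_zero hik hlj.symm
      (g := fun z => z ^ (m - j) * conj z ^ (m - l)) (by fun_prop), mul_zero]

lemma integral_norm_cInner_pow (hν : IsUnitarilyInvariantOnSphere ν) {u : Fin d → ℂ} {c : ℝ}
    (hc : 0 < c) (hu : cInner u u = c ^ 2) (i : Fin d) (m : ℕ) :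
    ∫ φ, ‖cInner u φ‖ ^ (2 * m) ∂ν = c ^ (2 * m) * ∫ φ, ‖φ i‖ ^ (2 * m) ∂ν := by
  have hc' : (c : ℂ) ≠ 0 := by exact_mod_cast hc.ne'
  have hunit : cInner ((c⁻¹ : ℂ) • u) ((c⁻¹ : ℂ) • u) = 1 := by
    rw [cInner_smul_left, cInner_smul_right, hu]
    simp only [map_inv₀, Complex.conj_ofReal]
    field_simp
  have hscale : ∀ φ, cInner u φ = c * cInner ((c⁻¹ : ℂ) • u) φ := fun φ => by
    rw [cInner_smul_left]
    simp only [map_inv₀, Complex.conj_ofReal]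
    field_simp
  simp_rw [hscale, norm_mul, mul_pow, Complex.norm_real, Real.norm_of_nonneg hc.le]
  rw [integral_const_mul, hν.integral_comp_cInner hunit i (g := fun z => ‖z‖ ^ (2 * m))
    (by fun_prop)]

lemma integral_norm_add_pow_eq (hν : IsUnitarilyInvariantOnSphere ν) {i k : Fin d} (hik : i ≠ k)
    {a b : ℝ} (hab : 0 < a ^ 2 + b ^ 2) (m : ℕ) :
    ∫ φ, ‖(a : ℂ) * φ i + b * φ k‖ ^ (2 * m) ∂ν =
      (a ^ 2 + b ^ 2) ^ m * ∫ φ, ‖φ i‖ ^ (2 * m) ∂ν := by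
  set u : Fin d → ℂ := Pi.single i (a : ℂ) + Pi.single k (b : ℂ)
  have hu : ∀ φ, cInner u φ = a * φ i + b * φ k := fun φ => by
    simp [u, cInner_single_add_single]
  have huu : cInner u u = ((√(a ^ 2 + b ^ 2) : ℝ) : ℂ) ^ 2 := by
    rw [hu, ← Complex.ofReal_pow, Real.sq_sqrt hab.le]
    simp [u, hik, hik.symm]
    ring
  simp_rw [← hu]
  rw [hν.integral_norm_cInner_pow (Real.sqrt_pos.mpr hab) huu i, pow_mul, Real.sq_sqrt hab.le]

lemma choose_mul_integral_norm_pow_mul_norm_pow (hν : IsUnitarilyInvariantOnSphere ν)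
    {i k : Fin d} (hik : i ≠ k) {m j : ℕ} (hj : j ≤ m) :
    (m.choose j : ℝ) * ∫ φ, ‖φ i‖ ^ (2 * j) * ‖φ k‖ ^ (2 * (m - j)) ∂ν =
      ∫ φ, ‖φ i‖ ^ (2 * m) ∂ν := by
  have hcoeff := eq_of_forall_pos_sum_mul_pow_eq (n := m)
    (c := fun j => (m.choose j : ℝ) ^ 2 * ∫ φ, ‖φ i‖ ^ (2 * j) * ‖φ k‖ ^ (2 * (m - j)) ∂ν)
    (c' := fun j => (m.choose j : ℝ) * ∫ φ, ‖φ i‖ ^ (2 * m) ∂ν) (fun x hx => ?_) hj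
  · have hchoose : (m.choose j : ℝ) ≠ 0 := by exact_mod_cast (Nat.choose_pos hj).ne'
    exact mul_left_cancel₀ hchoose (by linear_combination hcoeff)
  · have hexpand := hν.integral_norm_add_pow hik (√x) 1 m
    rw [hν.integral_norm_add_pow_eq hik (by positivity) m] at hexpand
    have hsqrt : ∀ n, √x ^ (2 * n) = x ^ n := fun n => by rw [pow_mul, Real.sq_sqrt hx.le]
    simp only [hsqrt, Real.sq_sqrt hx.le, one_pow, mul_one, add_pow] at hexpand
    calc _ = ∑ j ∈ range (m + 1), (m.choose j : ℝ) ^ 2 * x ^ j *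
          ∫ φ, ‖φ i‖ ^ (2 * j) * ‖φ k‖ ^ (2 * (m - j)) ∂ν := sum_congr rfl fun _ _ => by ring
      _ = _ := hexpand.symm
      _ = _ := by rw [sum_mul]; exact sum_congr rfl fun _ _ => by ring

lemma succ_mul_integral_norm_pow (hν : IsUnitarilyInvariantOnSphere ν) (i : Fin d) (n : ℕ) :
    (n + 1 : ℝ) * ∫ φ, ‖φ i‖ ^ (2 * n) ∂ν = (n + d) * ∫ φ, ‖φ i‖ ^ (2 * (n + 1)) ∂ν := by
  have hsplit : ∫ φ, ‖φ i‖ ^ (2 * n) ∂ν = ∑ l, ∫ φ, ‖φ i‖ ^ (2 * n) * ‖φ l‖ ^ 2 ∂ν := by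
    rw [← integral_finsetSum _ fun l _ => hν.integrable_of_continuous (by fun_prop)]
    refine integral_congr_ae ?_
    filter_upwards [hν.ae_sum_norm_sq_eq_one] with φ hφ
    rw [← mul_sum, hφ, mul_one]
  have hdiag : ∫ φ, ‖φ i‖ ^ (2 * n) * ‖φ i‖ ^ 2 ∂ν = ∫ φ, ‖φ i‖ ^ (2 * (n + 1)) ∂ν := by
    simp only [← pow_add, mul_add, mul_one]
  have hoff : ∀ l ∈ univ.erase i, (n + 1 : ℝ) * ∫ φ, ‖φ i‖ ^ (2 * n) * ‖φ l‖ ^ 2 ∂ν =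
      ∫ φ, ‖φ i‖ ^ (2 * (n + 1)) ∂ν := fun l hl => by
    have h := hν.choose_mul_integral_norm_pow_mul_norm_pow (ne_of_mem_erase hl).symm
      (Nat.le_add_right n 1)
    rwa [Nat.choose_succ_self_right, Nat.add_sub_cancel_left, mul_one, Nat.cast_succ] at h
  have hcard : (#(univ.erase i) : ℝ) + 1 = d := by
    exact_mod_cast (card_erase_add_one (mem_univ i)).trans (card_fin d)
  rw [hsplit, mul_sum, ← add_sum_erase _ _ (mem_univ i), hdiag, sum_congr rfl hoff, sum_const,
    nsmul_eq_mul, ← hcard]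
  ring

lemma integral_norm_pow_eq (hν : IsUnitarilyInvariantOnSphere ν) (i : Fin d) (n : ℕ) :
    ∫ φ, ‖φ i‖ ^ (2 * n) ∂ν = (n.factorial * (d - 1).factorial : ℝ) / (n + d - 1).factorial := by
  obtain ⟨d, rfl⟩ : ∃ d', d = d' + 1 := Nat.exists_eq_add_one_of_ne_zero i.pos.ne'
  have := hν.isProbabilityMeasure
  simp only [Nat.add_sub_cancel, ← Nat.add_assoc]
  induction n with
  | zero => simp [Nat.factorial_ne_zero]
  | succ n ih =>
    have hrec := hν.succ_mul_integral_norm_pow i n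
    rw [ih] at hrec
    rw [Nat.add_right_comm, Nat.factorial_succ (n + d), Nat.factorial_succ n]
    push_cast at hrec ⊢
    have : (n + (d + 1) : ℝ) ≠ 0 := by positivity
    have : ((n + d).factorial : ℝ) ≠ 0 := by positivity
    field_simp
    field_simp at hrec
    linear_combination -hrec

end IsUnitarilyInvariantOnSphere

/-- For unit vectors `v_1, …, v_N ∈ ℂ^d`, the probability of any fixed outcome
string under `N` independent single-copy measurements of a Haar-random pure
state is at most the reciprocal of the dimension of the symmetric subspace:
`∫ ∏ i, |⟨v_i, φ⟩|² dμ_d(φ) ≤ N! (d − 1)! / (N + d − 1)!`. -/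
theorem haar_outcome_prob_le_symmetric_dim_inv {d N : ℕ} (hd : 0 < d) (hN : 0 < N)
    (μU : Measure (Fin d → Fin d → ℂ)) (hμU : IsHaarUnitary μU)
    (v : Fin N → Fin d → ℂ) (hv : ∀ i, ∑ j, ‖v i j‖ ^ 2 = 1) :
    ∫ φ, ∏ i, ‖cInner (v i) φ‖ ^ 2 ∂(pureStateMeasure hd μU)
      ≤ (Nat.factorial N * Nat.factorial (d - 1) : ℝ) /
          Nat.factorial (N + d - 1) := by
  have hν := hμU.isUnitarilyInvariantOnSphere_pureStateMeasure hd
  have hamgm : ∀ φ, ∏ i, ‖cInner (v i) φ‖ ^ 2 ≤ (N : ℝ)⁻¹ * ∑ i, ‖cInner (v i) φ‖ ^ (2 * N) :=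
    fun φ => by
      simpa [pow_mul] using prod_le_inv_card_mul_sum_pow (univ_nonempty_iff.2 ⟨⟨0, hN⟩⟩)
        (x := fun i => ‖cInner (v i) φ‖ ^ 2) fun _ _ => by positivity
  have hcInner : ∀ i, ∫ φ, ‖cInner (v i) φ‖ ^ (2 * N) ∂pureStateMeasure hd μU =
      ∫ φ, ‖φ ⟨0, hd⟩‖ ^ (2 * N) ∂pureStateMeasure hd μU := fun i =>
    hν.integral_comp_cInner (cInner_self_eq_one (hv i)) _ (g := fun z => ‖z‖ ^ (2 * N))
      (by fun_prop)
  have hN' : (N : ℝ) ≠ 0 := by exact_mod_cast hN.ne'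
  calc _ ≤ ∫ φ, (N : ℝ)⁻¹ * ∑ i, ‖cInner (v i) φ‖ ^ (2 * N) ∂pureStateMeasure hd μU :=
        integral_mono (hν.integrable_of_continuous (by unfold cInner; fun_prop))
          (hν.integrable_of_continuous (by unfold cInner; fun_prop)) hamgm
    _ = ∫ φ, ‖φ ⟨0, hd⟩‖ ^ (2 * N) ∂pureStateMeasure hd μU := by
        rw [integral_const_mul, integral_finsetSum _ fun i _ =>
            hν.integrable_of_continuous (by unfold cInner; fun_prop),
          sum_congr rfl fun i _ => hcInner i, sum_const, card_univ, Fintype.card_fin,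
          nsmul_eq_mul, inv_mul_cancel_left₀ hN']
    _ = _ := hν.integral_norm_pow_eq _ N
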